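/- arXiv:1803.05515 — 4 statements merged into one kernel-verified Lean document; each statement's English description precedes it below -/
import Mathlib

section
/- For a Weyl group element w with w = vu and ℓ(w) = ℓ(v) + ℓ(u), the inclusion N_Δ(v) ⊆ N_Δ(w) is strict if and only if there exists a root α ∈ N(u) such that v(α) is a simple root. -/
/-!
A finite crystallographic root system `Φ` in a real vector space `V`, with a choice of
positive roots `Pos`, simple roots `Δ`, Weyl group `W` (a subgroup of the linear
automorphisms of `V`), and simple reflections `refl α` for `α ∈ Δ`.
-/
structure WeylData (V : Type*) [AddCommGroup V] [Module ℝ V] where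
  /-- the set of roots -/
  Φ : Set V
  /-- the set of positive roots -/
  Pos : Set V
  /-- the set of simple roots -/
  Δ : Set V
  /-- the Weyl group -/
  W : Subgroup (V ≃ₗ[ℝ] V)
  /-- the reflection associated to a root -/
  refl : V → V ≃ₗ[ℝ] V
  finite : Φ.Finite
  pos_sub : Pos ⊆ Φ
  delta_sub : Δ ⊆ Pos
  neg_mem : ∀ α ∈ Φ, -α ∈ Φ
  pos_or_neg : ∀ α ∈ Φ, α ∈ Pos ∨ -α ∈ Pos
  not_both : ∀ α ∈ Φ, ¬ (α ∈ Pos ∧ -α ∈ Pos)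
  delta_indep : LinearIndependent ℝ ((↑) : Δ → V)
  stable : ∀ w ∈ W, ∀ α ∈ Φ, w α ∈ Φ
  refl_mem : ∀ α ∈ Δ, refl α ∈ W
  refl_self : ∀ α ∈ Δ, refl α α = -α
  refl_perm : ∀ α ∈ Δ, ∀ β ∈ Pos, β ≠ α → refl α β ∈ Pos
  refl_sq : ∀ α ∈ Δ, refl α * refl α = 1
  gen : W = Subgroup.closure (refl '' Δ)

namespace WeylData

variable {V : Type*} [AddCommGroup V] [Module ℝ V] (D : WeylData V)

/-- The set of negative roots `Φ⁻ = -Φ⁺`. -/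
def NegRoots : Set V := Neg.neg '' D.Pos

/-- The left inversion set `N(w) = Φ⁺ ∩ w(Φ⁻)`. -/
def N (w : V ≃ₗ[ℝ] V) : Set V := D.Pos ∩ (⇑w '' D.NegRoots)

/-- The right inversion set `I(w) = Φ⁺ ∩ w⁻¹(Φ⁻)`. -/
def I (w : V ≃ₗ[ℝ] V) : Set V := D.Pos ∩ (⇑w⁻¹ '' D.NegRoots)

/-- The length of a Weyl group element: the number of its (left) inversions. -/
noncomputable def len (w : V ≃ₗ[ℝ] V) : ℕ := (D.N w).ncard

/-- The right weak order: `u ≤_R w` iff `ℓ(u) + ℓ(u⁻¹ w) = ℓ(w)`. -/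
def leR (u w : V ≃ₗ[ℝ] V) : Prop := D.len u + D.len (u⁻¹ * w) = D.len w

/-- The covering relation of the right weak order: `v ⋖_R w` iff `w = v s_α` for a simple
root `α` with `ℓ(w) = ℓ(v) + 1`. -/
def covR (v w : V ≃ₗ[ℝ] V) : Prop :=
  ∃ α ∈ D.Δ, w = v * D.refl α ∧ D.len w = D.len v + 1

/-- `N_Δ(w) = Δ ∩ N(w)`, the simple roots in the inversion set of `w`. -/
def NΔ (w : V ≃ₗ[ℝ] V) : Set V := D.Δ ∩ D.N w

/-- A subset of roots is closed if it is stable under taking sums which are roots. -/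
def Closed (A : Set V) : Prop := ∀ α ∈ A, ∀ β ∈ A, α + β ∈ D.Φ → α + β ∈ A

end WeylData

namespace WeylData

variable {V : Type*} [AddCommGroup V] [Module ℝ V] (D : WeylData V)

lemma inv_apply' (e : V ≃ₗ[ℝ] V) (x : V) : (e⁻¹ : V ≃ₗ[ℝ] V) x = e.symm x := rfl

lemma mem_N_iff (w : V ≃ₗ[ℝ] V) (β : V) :
    β ∈ D.N w ↔ β ∈ D.Pos ∧ (w⁻¹ : V ≃ₗ[ℝ] V) β ∈ D.NegRoots := by
  unfold N
  constructor
  · rintro ⟨hb, x, hx, rfl⟩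
    exact ⟨hb, by rw [inv_apply', w.symm_apply_apply]; exact hx⟩
  · rintro ⟨hb, hx⟩
    exact ⟨hb, (w⁻¹ : V ≃ₗ[ℝ] V) β, hx, by rw [inv_apply', w.apply_symm_apply]⟩

lemma pos_neg_disjoint : Disjoint D.Pos D.NegRoots := by
  rw [Set.disjoint_left]
  rintro a ha ⟨b, hb, rfl⟩
  exact D.not_both (-b) (D.pos_sub ha) ⟨ha, by simpa using hb⟩

lemma N_subset_pos (w : V ≃ₗ[ℝ] V) : D.N w ⊆ D.Pos := Set.inter_subset_left

lemma N_finite (w : V ≃ₗ[ℝ] V) : (D.N w).Finite :=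
  D.finite.subset ((D.N_subset_pos w).trans D.pos_sub)

lemma N_decomp_subset (v u : V ≃ₗ[ℝ] V) (hv : v ∈ D.W) (hu : u ∈ D.W) :
    D.N (v * u) ⊆ D.N v ∪ ⇑v '' D.N u := by
  intro β hβ
  rw [mem_N_iff] at hβ
  obtain ⟨hβp, hβn⟩ := hβ
  have hβΦ : β ∈ D.Φ := D.pos_sub hβp
  have hvinv : v⁻¹ ∈ D.W := inv_mem hv
  have h1 : (v⁻¹ : V ≃ₗ[ℝ] V) β ∈ D.Φ := D.stable _ hvinv _ hβΦ
  rcases D.pos_or_neg _ h1 with hp | hn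
  · right
    refine ⟨(v⁻¹ : V ≃ₗ[ℝ] V) β, ?_, ?_⟩
    · rw [mem_N_iff]
      refine ⟨hp, ?_⟩
      have heq : (u⁻¹ : V ≃ₗ[ℝ] V) ((v⁻¹ : V ≃ₗ[ℝ] V) β) = ((v * u)⁻¹ : V ≃ₗ[ℝ] V) β := by
        rw [mul_inv_rev]; rfl
      rw [heq]; exact hβn
    · rw [inv_apply', v.apply_symm_apply]
  · left
    rw [mem_N_iff]
    refine ⟨hβp, -(v⁻¹ : V ≃ₗ[ℝ] V) β, hn, by simp⟩

lemma N_disjoint (v u : V ≃ₗ[ℝ] V) :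
    Disjoint (D.N v) (⇑v '' D.N u) := by
  rw [Set.disjoint_left]
  rintro a ha ⟨b, hb, rfl⟩
  rw [mem_N_iff] at ha
  obtain ⟨hap, han⟩ := ha
  have hbp : b ∈ D.Pos := D.N_subset_pos u hb
  rw [inv_apply', v.symm_apply_apply] at han
  exact (D.pos_neg_disjoint.le_bot ⟨hbp, han⟩).elim

lemma N_decomp (v u : V ≃ₗ[ℝ] V) (hv : v ∈ D.W) (hu : u ∈ D.W)
    (h : D.len (v * u) = D.len v + D.len u) :
    D.N (v * u) = D.N v ∪ ⇑v '' D.N u := by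
  have hsub := D.N_decomp_subset v u hv hu
  have hfin : (D.N v ∪ ⇑v '' D.N u).Finite :=
    (D.N_finite v).union ((D.N_finite u).image _)
  have himg : (⇑v '' D.N u).ncard = (D.N u).ncard :=
    Set.ncard_image_of_injective _ v.injective
  have hcard : (D.N v ∪ ⇑v '' D.N u).ncard ≤ (D.N (v * u)).ncard := by
    rw [Set.ncard_union_eq (D.N_disjoint v u) (D.N_finite v) ((D.N_finite u).image _), himg]
    exact le_of_eq (by simpa [WeylData.len] using h.symm)
  exact Set.eq_of_subset_of_ncard_le hsub hcard hfin

end WeylData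

/-- for `w = vu` with `ℓ(w) = ℓ(v) + ℓ(u)`, the inclusion
`N_Δ(v) ⊆ N_Δ(w)` is strict iff some `α ∈ N(u)` has `v(α)` simple. -/
theorem simple_inversions_ssubset_iff {V : Type*} [AddCommGroup V] [Module ℝ V]
    (D : WeylData V) (v u : V ≃ₗ[ℝ] V) (hv : v ∈ D.W) (hu : u ∈ D.W)
    (h : D.len (v * u) = D.len v + D.len u) :
    D.NΔ v ⊂ D.NΔ (v * u) ↔ ∃ α ∈ D.N u, v α ∈ D.Δ := by

  have hdec := D.N_decomp v u hv hu h
  have hsub : D.NΔ v ⊆ D.NΔ (v * u) := by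
    rintro β ⟨hβΔ, hβN⟩
    exact ⟨hβΔ, hdec ▸ Set.mem_union_left _ hβN⟩
  rw [Set.ssubset_iff_of_subset hsub]
  constructor
  · rintro ⟨β, ⟨hβΔ, hβN⟩, hβn⟩
    rw [hdec] at hβN
    rcases hβN with hβ | ⟨α, hα, rfl⟩
    · exact absurd ⟨hβΔ, hβ⟩ hβn
    · exact ⟨α, hα, hβΔ⟩
  · rintro ⟨α, hα, hαΔ⟩
    refine ⟨v α, ⟨hαΔ, hdec ▸ Set.mem_union_right _ ⟨α, hα, rfl⟩⟩, ?_⟩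
    rintro ⟨_, hN⟩
    exact (D.N_disjoint v u).le_bot ⟨hN, ⟨α, hα, rfl⟩⟩
end

section
/- In a Coxeter group W, the lower interval [id, w] in the Bruhat order coincides (as a set) with the lower interval [id, w]_R in the right weak order if and only if w is the longest element of the standard parabolic subgroup W_{S(w)} generated by the support S(w) of w. -/
/-!
If every simple reflection in `J` is a left descent of `w`, then every `v ∈ W_J` is a prefix
of `w` in the right weak order. Build `v` from a reduced word in `J` one letter at a time: when
`v < s v` and `s` is a left descent of `w = v (v⁻¹ w)`, the reflection `v⁻¹ s v` is a left
inversion of `v⁻¹ w`, because left inversion sets obey `N(xy) = N(x) Δ x N(y) x⁻¹`; so `s v` is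
again a prefix. Each side of the theorem forces every `s ∈ S(w)` to be a left descent of `w`: a
longest element of `W_{S(w)}` trivially, and equal intervals because `s` lies Bruhat-below `w`.
As everything Bruhat-below `w` lies in `W_{S(w)}`, and prefixes are Bruhat-below `w`, the
theorem follows.

The inversion-set rule, and the exchange property used to find reduced words in `J`, come from
the sign representation of `W` on `W × ℤˣ`, in which `s i` conjugates the first coordinate and
flips the sign exactly at `s i`.
-/

namespace CoxeterSystem

variable {B W : Type*} [Group W] {M : CoxeterMatrix B} (cs : CoxeterSystem M W)

/-- The Bruhat order on `W`, defined via the subword property: `u ≤ w` iff some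
reduced word for `w` has a subword whose product is `u`. -/
def bruhatLE (u w : W) : Prop :=
  ∃ ω : List B, cs.IsReduced ω ∧ cs.wordProd ω = w ∧
    ∃ ω' : List B, ω'.Sublist ω ∧ cs.wordProd ω' = u

/-- The right weak order on `W`: `u ≤_R w` iff `ℓ(u) + ℓ(u⁻¹ w) = ℓ(w)`. -/
def rightWeakLE (u w : W) : Prop :=
  cs.length u + cs.length (u⁻¹ * w) = cs.length w

/-- The left weak order on `W`: `u ≤_L w` iff `ℓ(u) + ℓ(w u⁻¹) = ℓ(w)`. -/
def leftWeakLE (u w : W) : Prop :=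
  cs.length u + cs.length (w * u⁻¹) = cs.length w

/-- The support of `w`: the set of simple reflections occurring in some reduced word
for `w`. -/
def support (w : W) : Set B :=
  {i | ∃ ω : List B, cs.IsReduced ω ∧ cs.wordProd ω = w ∧ i ∈ ω}

/-- The standard parabolic subgroup `W_J` generated by the simple reflections in `J`. -/
def parabolic (J : Set B) : Subgroup W := Subgroup.closure (cs.simple '' J)

/-- `w` is the longest element of the subgroup `H`. -/
def IsLongestOf (H : Subgroup W) (w : W) : Prop :=
  w ∈ H ∧ ∀ u ∈ H, cs.length u ≤ cs.length w

/-- The left descent set of `w`. -/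
def leftDescents (w : W) : Set B :=
  {i | cs.length (cs.simple i * w) < cs.length w}

local prefix:100 "s" => cs.simple
local prefix:100 "π" => cs.wordProd
local prefix:100 "ℓ" => cs.length
local prefix:100 "ris" => cs.rightInvSeq

open scoped Classical

theorem _root_.mul_mul_inv_eq_iff_eq_inv_mul_mul {G : Type*} [Group G] {x t y : G} :
    x * t * x⁻¹ = y ↔ t = x⁻¹ * y * x := by
  constructor <;> rintro rfl <;> group

noncomputable def signAction (i : B) : Function.End (W × ℤˣ) :=
  fun x => (s i * x.1 * s i, x.2 * if x.1 = s i then -1 else 1)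

theorem pow_inv_mul_simple (i j : B) (k : ℕ) :
    ((s i * s j) ^ k)⁻¹ * s j = s j * (s i * s j) ^ k := by
  have h := conj_pow (a := s j) (b := s i * s j) (i := k)
  rw [cs.inv_simple, show s j * (s i * s j) * s j = (s i * s j)⁻¹ by
    rw [mul_inv_rev, cs.inv_simple, cs.inv_simple, ← mul_assoc, cs.simple_mul_simple_cancel_right],
    inv_pow] at h
  rw [h, cs.simple_mul_simple_cancel_right]

theorem signAction_mul_pow_apply (i j : B) (k : ℕ) (t : W) (ε : ℤˣ) :
    ((cs.signAction i * cs.signAction j) ^ k) (t, ε) =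
      ((s i * s j) ^ k * t * ((s i * s j) ^ k)⁻¹,
        ε * ∏ n ∈ Finset.range (2 * k), if t = s j * (s i * s j) ^ n then -1 else 1) := by
  set p := s i * s j
  induction k with
  | zero =>
    simp only [pow_zero, one_mul, inv_one, mul_one, mul_zero, Finset.range_zero,
      Finset.prod_empty]
    rfl
  | succ k ih =>
    set u := p ^ k * t * (p ^ k)⁻¹
    have hj : u = s j ↔ t = s j * p ^ (2 * k) := by
      rw [mul_mul_inv_eq_iff_eq_inv_mul_mul, cs.pow_inv_mul_simple, mul_assoc, ← pow_add, two_mul]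
    have hi : s j * u * s j = s i ↔ t = s j * p ^ (2 * k + 1) := by
      have hu : s j * u * s j = (s j * p ^ k) * t * (s j * p ^ k)⁻¹ := by
        simp only [u, mul_inv_rev, cs.inv_simple]; group
      have hconj : (s j * p ^ k)⁻¹ * s i * (s j * p ^ k) = s j * p ^ (2 * k + 1) := by
        calc (s j * p ^ k)⁻¹ * s i * (s j * p ^ k) = (p ^ k)⁻¹ * s j * p * p ^ k := by
              simp only [p, mul_inv_rev, cs.inv_simple]; group
          _ = s j * p ^ (2 * k + 1) := by
              rw [cs.pow_inv_mul_simple, mul_assoc, mul_assoc, ← pow_succ', ← pow_add, two_mul,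
                add_assoc]
      rw [hu, mul_mul_inv_eq_iff_eq_inv_mul_mul, hconj]
    rw [pow_succ']
    change cs.signAction i (cs.signAction j
      (((cs.signAction i * cs.signAction j) ^ k) (t, ε))) = _
    rw [ih]
    simp only [signAction, if_congr hj rfl rfl, if_congr hi rfl rfl, Prod.mk.injEq]
    constructor
    · simp only [u, p, pow_succ', mul_inv_rev, cs.inv_simple]; group
    · rw [show 2 * (k + 1) = 2 * k + 1 + 1 by ring, Finset.prod_range_succ, Finset.prod_range_succ]
      simp only [mul_assoc]

-- For `k = M i j` the sign product runs twice over a period of `n ↦ s j * (s i * s j) ^ n`.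
theorem isLiftable_signAction : M.IsLiftable cs.signAction := by
  intro i j
  funext ⟨t, ε⟩
  rw [signAction_mul_pow_apply, cs.simple_mul_simple_pow, two_mul, Finset.prod_range_add]
  simp only [pow_add, cs.simple_mul_simple_pow, one_mul, inv_one, mul_one, Int.units_mul_self]
  rfl

noncomputable def signRep : W →* Function.End (W × ℤˣ) :=
  cs.lift ⟨cs.signAction, cs.isLiftable_signAction⟩

theorem signRep_wordProd (ω : List B) (t : W) (ε : ℤˣ) :
    cs.signRep (π ω) (t, ε) = (π ω * t * (π ω)⁻¹, ε * (-1) ^ (ris ω).count t) := by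
  induction ω with
  | nil =>
    simp only [wordProd_nil, map_one, one_mul, inv_one, mul_one, rightInvSeq_nil, List.count_nil,
      pow_zero]
    rfl
  | cons i ω ih =>
    rw [cs.wordProd_cons, map_mul]
    change cs.signRep (s i) (cs.signRep (π ω) (t, ε)) = _
    rw [ih, signRep, cs.lift_apply_simple]
    simp only [signAction, rightInvSeq, List.count_cons, beq_iff_eq, Prod.mk.injEq,
      mul_mul_inv_eq_iff_eq_inv_mul_mul, eq_comm (a := t)]
    constructor
    · rw [mul_inv_rev, cs.inv_simple]; group
    · split_ifs <;> simp [pow_succ]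

noncomputable def inversionSign (w t : W) : ℤˣ := (cs.signRep w (t, 1)).2

theorem inversionSign_wordProd (ω : List B) (t : W) :
    cs.inversionSign (π ω) t = (-1) ^ (ris ω).count t := by
  rw [inversionSign, signRep_wordProd, one_mul]

theorem signRep_apply (w t : W) (ε : ℤˣ) :
    cs.signRep w (t, ε) = (w * t * w⁻¹, ε * cs.inversionSign w t) := by
  obtain ⟨ω, rfl⟩ := cs.wordProd_surjective w
  rw [signRep_wordProd, inversionSign_wordProd]

theorem inversionSign_mul (x y t : W) :
    cs.inversionSign (x * y) t = cs.inversionSign x (y * t * y⁻¹) * cs.inversionSign y t := by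
  rw [inversionSign, map_mul]
  change (cs.signRep x (cs.signRep y (t, 1))).2 = _
  rw [cs.signRep_apply y, cs.signRep_apply x, one_mul, mul_comm]

theorem inversionSign_one (t : W) : cs.inversionSign 1 t = 1 := by
  simpa using cs.inversionSign_wordProd [] t

theorem inversionSign_simple_self (i : B) : cs.inversionSign (s i) (s i) = -1 := by
  simpa using cs.inversionSign_wordProd [i] (s i)

theorem IsReflection.inversionSign_self {t : W} (ht : cs.IsReflection t) :
    cs.inversionSign t t = -1 := by
  obtain ⟨u, i, rfl⟩ := ht
  have hcancel : 1 = cs.inversionSign u (s i) * cs.inversionSign u⁻¹ (u * s i * u⁻¹) := by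
    rw [← cs.inversionSign_one (u * s i * u⁻¹), ← mul_inv_cancel u, inversionSign_mul]
    congr 2
    group
  rw [inversionSign_mul, inversionSign_mul, show u⁻¹ * (u * s i * u⁻¹) * u⁻¹⁻¹ = s i by group,
    show s i * s i * (s i)⁻¹ = s i by group, inversionSign_simple_self, mul_right_comm, ← hcancel,
    one_mul]

theorem mem_rightInvSeq_of_inversionSign_eq_neg_one {ω : List B} {t : W}
    (h : cs.inversionSign (π ω) t = -1) : t ∈ ris ω := by
  rw [inversionSign_wordProd] at h
  refine List.count_pos_iff.1 (Nat.pos_of_ne_zero fun h0 => ?_)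
  rw [h0, pow_zero] at h
  exact absurd h (by decide)

theorem isRightInversion_of_inversionSign_eq_neg_one {w t : W}
    (h : cs.inversionSign w t = -1) : cs.IsRightInversion w t := by
  obtain ⟨ω, hω, rfl⟩ := cs.exists_isReduced w
  exact cs.isRightInversion_of_mem_rightInvSeq hω
    (cs.mem_rightInvSeq_of_inversionSign_eq_neg_one h)

theorem isRightInversion_iff_inversionSign_eq_neg_one {w t : W} (ht : cs.IsReflection t) :
    cs.IsRightInversion w t ↔ cs.inversionSign w t = -1 := by
  refine ⟨fun h => ?_, cs.isRightInversion_of_inversionSign_eq_neg_one⟩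
  refine (Int.units_eq_one_or _).resolve_left fun h1 => ?_
  have hwt : cs.inversionSign (w * t) t = -1 := by
    rw [inversionSign_mul, show t * t * t⁻¹ = t by group, h1, one_mul, ht.inversionSign_self]
  exact ht.isRightInversion_mul_left_iff.1 (cs.isRightInversion_of_inversionSign_eq_neg_one hwt) h

theorem isLeftInversion_mul_iff {x y t : W} (ht : cs.IsReflection t) :
    cs.IsLeftInversion (x * y) t ↔
      Xor (cs.IsLeftInversion x t) (cs.IsLeftInversion y (x⁻¹ * t * x)) := by
  have ht' : cs.IsReflection (x⁻¹ * t * x) := by simpa using ht.conj x⁻¹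
  simp only [← isRightInversion_inv_iff, isRightInversion_iff_inversionSign_eq_neg_one, ht, ht',
    mul_inv_rev, inversionSign_mul, inv_inv]
  rcases Int.units_eq_one_or (cs.inversionSign x⁻¹ t) with h | h <;>
    rcases Int.units_eq_one_or (cs.inversionSign y⁻¹ (x⁻¹ * t * x)) with h' | h' <;>
    simp [h, h', Xor]

theorem exists_eraseIdx_eq_mul_of_isRightInversion {ω : List B} {t : W}
    (h : cs.IsRightInversion (π ω) t) : ∃ j < ω.length, π (ω.eraseIdx j) = π ω * t := by
  have ht := cs.mem_rightInvSeq_of_inversionSign_eq_neg_one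
    ((cs.isRightInversion_iff_inversionSign_eq_neg_one h.1).1 h)
  obtain ⟨j, hj, rfl⟩ := List.mem_iff_getElem.1 ht
  refine ⟨j, by simpa using hj, ?_⟩
  rw [← wordProd_mul_getD_rightInvSeq, List.getD_eq_getElem]

theorem exists_reduced_word_mul_simple {J : Set B} {ω : List B} (hω : cs.IsReduced ω)
    (hωJ : ∀ i ∈ ω, i ∈ J) {i : B} (hi : i ∈ J) :
    ∃ ω' : List B, cs.IsReduced ω' ∧ (∀ i ∈ ω', i ∈ J) ∧ π ω' = π ω * s i := by
  by_cases hdesc : cs.IsRightDescent (π ω) i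
  · obtain ⟨j, hj, hπ⟩ := cs.exists_eraseIdx_eq_mul_of_isRightInversion
      ((cs.isRightInversion_simple_iff_isRightDescent _ _).2 hdesc)
    refine ⟨ω.eraseIdx j, ?_, fun k hk => hωJ k ((List.eraseIdx_sublist _ _).subset hk), hπ⟩
    have := List.length_eraseIdx_add_one hj
    have := cs.length_mul_simple (π ω) i
    unfold IsReduced IsRightDescent at *
    rw [hπ]
    omega
  · refine ⟨ω ++ [i], ?_, ?_, by simp [wordProd_append]⟩
    swap
    · simp only [List.mem_append, List.mem_singleton]
      rintro k (hk | rfl)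
      exacts [hωJ k hk, hi]
    have := cs.length_mul_simple (π ω) i
    unfold IsReduced IsRightDescent at *
    simp only [wordProd_append, wordProd_singleton, List.length_append, List.length_singleton]
    omega

theorem exists_reduced_word_of_mem_parabolic {J : Set B} {v : W} (hv : v ∈ cs.parabolic J) :
    ∃ ω : List B, cs.IsReduced ω ∧ (∀ i ∈ ω, i ∈ J) ∧ π ω = v := by
  induction hv using Subgroup.closure_induction_right with
  | one => exact ⟨[], by simp [IsReduced], by simp, by simp⟩
  | mul_right v _ x hx ih =>
    obtain ⟨i, hi, rfl⟩ := hx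
    obtain ⟨ω, hω, hωJ, rfl⟩ := ih
    exact cs.exists_reduced_word_mul_simple hω hωJ hi
  | mul_inv_cancel v _ x hx ih =>
    obtain ⟨i, hi, rfl⟩ := hx
    obtain ⟨ω, hω, hωJ, rfl⟩ := ih
    rw [inv_simple]
    exact cs.exists_reduced_word_mul_simple hω hωJ hi

theorem rightWeakLE_simple_mul {v w : W} {i : B} (hvw : cs.rightWeakLE v w)
    (hw : cs.IsLeftDescent w i) (hv : ¬cs.IsLeftDescent v i) : cs.rightWeakLE (s i * v) w := by
  have hinv : cs.IsLeftInversion (v⁻¹ * w) (v⁻¹ * s i * v) := by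
    have h := (cs.isLeftInversion_mul_iff (x := v) (y := v⁻¹ * w) (cs.isReflection_simple i)).1
      (by simpa using hw)
    exact h.or.resolve_left (by simpa using hv)
  have hlt : ℓ ((s i * v)⁻¹ * w) < ℓ (v⁻¹ * w) := by
    simpa [mul_assoc, cs.inv_simple] using hinv.2
  have hsv := cs.length_simple_mul v i
  have htri := cs.length_mul_le (s i * v) ((s i * v)⁻¹ * w)
  rw [mul_inv_cancel_left] at htri
  unfold rightWeakLE IsLeftDescent at *
  omega

theorem rightWeakLE_of_mem_parabolic {J : Set B} {v w : W} (hJ : J ⊆ cs.leftDescents w)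
    (hv : v ∈ cs.parabolic J) : cs.rightWeakLE v w := by
  obtain ⟨ω, hω, hωJ, rfl⟩ := cs.exists_reduced_word_of_mem_parabolic hv
  clear hv
  induction ω with
  | nil => simp [rightWeakLE]
  | cons i ω ih =>
    have hω' : cs.IsReduced ω := by simpa using hω.drop 1
    have hnot : ¬cs.IsLeftDescent (π ω) i := by
      have := cs.length_wordProd_le ω
      unfold IsReduced at hω hω'
      rw [wordProd_cons] at hω
      simp only [IsLeftDescent, hω, List.length_cons]
      omega
    rw [wordProd_cons]
    exact cs.rightWeakLE_simple_mul (ih hω' fun k hk => hωJ k (List.mem_cons_of_mem i hk))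
      (hJ (hωJ i List.mem_cons_self)) hnot

theorem bruhatLE_of_rightWeakLE {u w : W} (h : cs.rightWeakLE u w) : cs.bruhatLE u w := by
  obtain ⟨α, hα, rfl⟩ := cs.exists_isReduced u
  obtain ⟨β, hβ, hβw⟩ := cs.exists_isReduced ((π α)⁻¹ * w)
  have hw : π (α ++ β) = w := by rw [wordProd_append, ← hβw, mul_inv_cancel_left]
  refine ⟨α ++ β, ?_, hw, α, List.sublist_append_left α β, rfl⟩
  unfold IsReduced rightWeakLE at *
  rw [hw, List.length_append, ← hα, ← hβ, ← hβw, h]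

theorem wordProd_mem_parabolic {J : Set B} {ω : List B} (h : ∀ i ∈ ω, i ∈ J) :
    π ω ∈ cs.parabolic J := by
  refine list_prod_mem fun x hx => ?_
  obtain ⟨i, hi, rfl⟩ := List.mem_map.1 hx
  exact Subgroup.subset_closure ⟨i, h i hi, rfl⟩

theorem mem_parabolic_support_of_bruhatLE {u w : W} (h : cs.bruhatLE u w) :
    u ∈ cs.parabolic (cs.support w) := by
  obtain ⟨ω, hω, hπ, ω', hsub, rfl⟩ := h
  exact cs.wordProd_mem_parabolic fun i hi => ⟨ω, hω, hπ, hsub.subset hi⟩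

theorem bruhatLE_refl (w : W) : cs.bruhatLE w w := by
  obtain ⟨ω, hω, rfl⟩ := cs.exists_isReduced w
  exact ⟨ω, hω, rfl, ω, List.Sublist.refl ω, rfl⟩

theorem bruhatLE_simple_of_mem_support {w : W} {i : B} (hi : i ∈ cs.support w) :
    cs.bruhatLE (s i) w := by
  obtain ⟨ω, hω, hπ, hiω⟩ := hi
  exact ⟨ω, hω, hπ, [i], List.singleton_sublist.2 hiω, wordProd_singleton cs i⟩

theorem rightWeakLE_simple_iff {w : W} {i : B} :
    cs.rightWeakLE (s i) w ↔ cs.IsLeftDescent w i := by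
  have := cs.length_simple_mul w i
  unfold rightWeakLE IsLeftDescent
  rw [length_simple, inv_simple]
  omega

theorem IsLongestOf.subset_leftDescents {J : Set B} {w : W}
    (h : cs.IsLongestOf (cs.parabolic J) w) : J ⊆ cs.leftDescents w := fun i hi =>
  lt_of_le_of_ne (h.2 _ (mul_mem (Subgroup.subset_closure ⟨i, hi, rfl⟩) h.1))
    (cs.length_simple_mul_ne w i)

end CoxeterSystem

theorem bruhat_interval_eq_weak_interval_iff_general {B W : Type*} [Group W]
    {M : CoxeterMatrix B} (cs : CoxeterSystem M W) (w : W) :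
    {u | cs.bruhatLE u w} = {u | cs.rightWeakLE u w} ↔
      cs.IsLongestOf (cs.parabolic (cs.support w)) w := by
  constructor
  · intro h
    have hdesc : cs.support w ⊆ cs.leftDescents w := fun i hi =>
      cs.rightWeakLE_simple_iff.1 (h.subset (cs.bruhatLE_simple_of_mem_support hi))
    refine ⟨cs.mem_parabolic_support_of_bruhatLE (cs.bruhatLE_refl w), fun u hu => ?_⟩
    have := cs.rightWeakLE_of_mem_parabolic hdesc hu
    unfold CoxeterSystem.rightWeakLE at this
    omega
  · intro h
    ext u
    exact ⟨fun hu => cs.rightWeakLE_of_mem_parabolic h.subset_leftDescents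
      (cs.mem_parabolic_support_of_bruhatLE hu), cs.bruhatLE_of_rightWeakLE⟩

/-- in a finite Coxeter group, the Bruhat lower interval `[id, w]` coincides
with the right weak order lower interval `[id, w]_R` iff `w` is the longest element of
the standard parabolic subgroup `W_{S(w)}` generated by the support of `w`. -/
theorem bruhat_interval_eq_weak_interval_iff {B W : Type*} [Group W] [Finite W]
    {M : CoxeterMatrix B} (cs : CoxeterSystem M W) (w : W) :
    {u | cs.bruhatLE u w} = {u | cs.rightWeakLE u w} ↔
      cs.IsLongestOf (cs.parabolic (cs.support w)) w :=
  bruhat_interval_eq_weak_interval_iff_general cs w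
end

section
/- In the symmetric group S₄, the elements w for which the right inversion set I(w) is contained in the sub-root system generated by N_Δ(w) (the simple roots in the left inversion set) are exactly: 1234, 2134, 1324, 1243, 1432, 2143, 3214, 4321. -/
open Equiv

namespace A3

/-- The ambient Euclidean space of the type `A₃` root system. -/
abbrev V : Type := Fin 4 → ℝ

/-- The standard basis vector `εᵢ`. -/
def e (i : Fin 4) : V := fun j => if j = i then 1 else 0

/-- The root `εᵢ - εⱼ`. -/
def rt (i j : Fin 4) : V := e i - e j

/-- The type `A₃` root system `Φ = {εᵢ - εⱼ : i ≠ j}`. -/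
def Φ : Set V := {x | ∃ i j : Fin 4, i ≠ j ∧ x = rt i j}

/-- The positive roots `Φ⁺ = {εᵢ - εⱼ : i < j}`. -/
def Pos : Set V := {x | ∃ i j : Fin 4, i < j ∧ x = rt i j}

/-- The negative roots `Φ⁻ = -Φ⁺`. -/
def NegR : Set V := {x | ∃ i j : Fin 4, i < j ∧ x = rt j i}

/-- The action of `S₄` on `V` by permutation of coordinates; it sends `εᵢ` to `ε_{w i}`. -/
def act (w : Perm (Fin 4)) (x : V) : V := x ∘ w.symm

/-- The simple roots `α₁, α₂, α₃`. -/
def a1 : V := rt 0 1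
def a2 : V := rt 1 2
def a3 : V := rt 2 3

/-- The left inversion set `N(w) = Φ⁺ ∩ w(Φ⁻)`. -/
def N (w : Perm (Fin 4)) : Set V := Pos ∩ (act w '' NegR)

/-- The right inversion set `I(w) = Φ⁺ ∩ w⁻¹(Φ⁻)`. -/
def I (w : Perm (Fin 4)) : Set V := Pos ∩ (act w⁻¹ '' NegR)

/-- A subset of `Φ⁺` is closed if stable under sums that are roots. -/
def Closed (A : Set V) : Prop := ∀ x ∈ A, ∀ y ∈ A, x + y ∈ Φ → x + y ∈ A

end A3

namespace A3

/-- The set of simple roots `Δ`. -/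
def Δ : Set V := {a1, a2, a3}

/-- `N_Δ(w) = Δ ∩ N(w)`. -/
def NΔ (w : Perm (Fin 4)) : Set V := Δ ∩ N w

/-- The sub-root system `Φ_K` spanned by a set `K` of simple roots. -/
def subSystem (K : Set V) : Set V := Φ ∩ (Submodule.span ℝ K : Set V)

/-- Permutations of `S₄` in one-line notation. -/
def p1234 : Perm (Fin 4) := 1
def p2134 : Perm (Fin 4) := ⟨![1, 0, 2, 3], ![1, 0, 2, 3], by decide, by decide⟩
def p1324 : Perm (Fin 4) := ⟨![0, 2, 1, 3], ![0, 2, 1, 3], by decide, by decide⟩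
def p1243 : Perm (Fin 4) := ⟨![0, 1, 3, 2], ![0, 1, 3, 2], by decide, by decide⟩
def p1432 : Perm (Fin 4) := ⟨![0, 3, 2, 1], ![0, 3, 2, 1], by decide, by decide⟩
def p2143 : Perm (Fin 4) := ⟨![1, 0, 3, 2], ![1, 0, 3, 2], by decide, by decide⟩
def p3214 : Perm (Fin 4) := ⟨![2, 1, 0, 3], ![2, 1, 0, 3], by decide, by decide⟩
def p4321 : Perm (Fin 4) := ⟨![3, 2, 1, 0], ![3, 2, 1, 0], by decide, by decide⟩

/-! The right inversion set `I(w)` consists of the roots `εᵢ - εⱼ` with `i < j` and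
`w i > w j`. Such a root is the sum of the simple roots `αₖ` with `i ≤ k < j`, and it lies in
the span of a set `K` of simple roots exactly when all of these belong to `K`: if `αₖ ∉ K`, the
fundamental coweight dual to `αₖ` vanishes on `span K` but not on `εᵢ - εⱼ`. Since `αₖ ∈ N(w)`
iff `w⁻¹(k+1) < w⁻¹(k)`, the condition `I(w) ⊆ Φ_{N_Δ(w)}` becomes a decidable condition on
`w`, which is checked over the 24 elements of `S₄`. -/

def simple (k : Fin 3) : V := rt k.castSucc k.succ

lemma Δ_eq_range_simple : Δ = Set.range simple := by
  ext v
  simp [Δ, Fin.exists_fin_succ, eq_comm (a := v), a1, a2, a3, simple]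

lemma rt_inj {i j k l : Fin 4} (hij : i ≠ j) : rt i j = rt k l ↔ i = k ∧ j = l := by
  refine ⟨fun h => ?_, fun h => h.1 ▸ h.2 ▸ rfl⟩
  have hi := congrFun h i
  have hj := congrFun h j
  simp only [rt, e, Pi.sub_apply] at hi hj
  split_ifs at hi hj <;> grind

lemma act_rt (w : Perm (Fin 4)) (i j : Fin 4) : act w (rt i j) = rt (w i) (w j) := by
  funext k
  simp only [act, rt, e, Function.comp_apply, Pi.sub_apply, Equiv.symm_apply_eq]

lemma mem_I {w : Perm (Fin 4)} {x : V} :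
    x ∈ I w ↔ ∃ i j : Fin 4, i < j ∧ w j < w i ∧ x = rt i j := by
  constructor
  · rintro ⟨⟨i, j, hij, rfl⟩, _, ⟨p, q, hpq, rfl⟩, hx⟩
    rw [act_rt, rt_inj (w⁻¹.injective.ne hpq.ne')] at hx
    obtain ⟨rfl, rfl⟩ := hx
    exact ⟨_, _, hij, by simpa using hpq, rfl⟩
  · rintro ⟨i, j, hij, hw, rfl⟩
    exact ⟨⟨i, j, hij, rfl⟩, rt (w i) (w j), ⟨w j, w i, hw, rfl⟩, by simp [act_rt]⟩

lemma rt_mem_I_iff {w : Perm (Fin 4)} {i j : Fin 4} (hij : i < j) :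
    rt i j ∈ I w ↔ w j < w i := by
  refine ⟨fun h => ?_, fun hw => mem_I.2 ⟨i, j, hij, hw, rfl⟩⟩
  obtain ⟨k, l, -, hw, hkl⟩ := mem_I.1 h
  obtain ⟨rfl, rfl⟩ := (rt_inj hij.ne).1 hkl
  exact hw

lemma N_eq_I_inv (w : Perm (Fin 4)) : N w = I w⁻¹ := by
  rw [I, inv_inv]
  rfl

lemma simple_mem_NΔ_iff {w : Perm (Fin 4)} {k : Fin 3} :
    simple k ∈ NΔ w ↔ w⁻¹ k.succ < w⁻¹ k.castSucc := by
  rw [NΔ, Set.mem_inter_iff, N_eq_I_inv, simple, rt_mem_I_iff (Fin.castSucc_lt_succ),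
    Δ_eq_range_simple]
  exact and_iff_right ⟨k, rfl⟩

lemma rt_eq_sum_simple {i j : Fin 4} (hij : i < j) :
    rt i j = ∑ k ∈ {k : Fin 3 | i ≤ k.castSucc ∧ k.succ ≤ j}, simple k := by
  rw [Finset.sum_filter, Fin.sum_univ_three]
  funext m
  fin_cases i <;> fin_cases j <;> fin_cases m <;> simp_all [simple, rt, e]

noncomputable def fundamentalCoweight (k : Fin 3) : V →ₗ[ℝ] ℝ :=
  ∑ m ∈ {m : Fin 4 | m ≤ k.castSucc}, LinearMap.proj m

lemma fundamentalCoweight_simple (k l : Fin 3) :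
    fundamentalCoweight k (simple l) = if l = k then 1 else 0 := by
  fin_cases k <;> fin_cases l <;>
    simp [fundamentalCoweight, simple, rt, e, Finset.sum_filter, Fin.sum_univ_four]

lemma fundamentalCoweight_rt {i j : Fin 4} (hij : i < j) (k : Fin 3) (hi : i ≤ k.castSucc)
    (hj : k.succ ≤ j) : fundamentalCoweight k (rt i j) = 1 := by
  rw [rt_eq_sum_simple hij, map_sum, Finset.sum_eq_single_of_mem k (by simp [hi, hj])]
  · simp [fundamentalCoweight_simple]
  · intro l _ hlk
    simp [fundamentalCoweight_simple, hlk]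

lemma rt_mem_span_iff {K : Set V} (hK : K ⊆ Δ) {i j : Fin 4} (hij : i < j) :
    rt i j ∈ Submodule.span ℝ K ↔ ∀ k : Fin 3, i ≤ k.castSucc → k.succ ≤ j → simple k ∈ K := by
  constructor
  · intro hmem k hi hj
    by_contra hk
    have hker : Submodule.span ℝ K ≤ LinearMap.ker (fundamentalCoweight k) := by
      rw [Submodule.span_le]
      intro v hv
      obtain ⟨l, rfl⟩ : v ∈ Set.range simple := Δ_eq_range_simple ▸ hK hv
      have hlk : l ≠ k := by rintro rfl; exact hk hv
      simp [fundamentalCoweight_simple, hlk]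
    simpa [fundamentalCoweight_rt hij k hi hj] using hker hmem
  · intro h
    rw [rt_eq_sum_simple hij]
    refine Submodule.sum_mem _ fun k hk => ?_
    obtain ⟨hi, hj⟩ := (Finset.mem_filter.1 hk).2
    exact Submodule.subset_span (h k hi hj)

lemma I_subset_subSystem_NΔ_iff (w : Perm (Fin 4)) :
    I w ⊆ subSystem (NΔ w) ↔
      ∀ i j : Fin 4, i < j → w j < w i →
        ∀ k : Fin 3, i ≤ k.castSucc → k.succ ≤ j → w⁻¹ k.succ < w⁻¹ k.castSucc := by
  have hK : NΔ w ⊆ Δ := Set.inter_subset_left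
  simp only [Set.subset_def, mem_I, subSystem, Set.mem_inter_iff, SetLike.mem_coe]
  constructor
  · intro h i j hij hw k hi hj
    exact simple_mem_NΔ_iff.1
      ((rt_mem_span_iff hK hij).1 (h _ ⟨i, j, hij, hw, rfl⟩).2 k hi hj)
  · rintro h _ ⟨i, j, hij, hw, rfl⟩
    exact ⟨⟨i, j, hij.ne, rfl⟩, (rt_mem_span_iff hK hij).2 fun k hi hj =>
      simple_mem_NΔ_iff.2 (h i j hij hw k hi hj)⟩

/-- the elements `w ∈ S₄` with `I(w) ⊆ Φ_{N_Δ(w)}` are exactly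
`1234, 2134, 1324, 1243, 1432, 2143, 3214, 4321`. -/
theorem I_subset_subSystem_iff :
    {w : Perm (Fin 4) | I w ⊆ subSystem (NΔ w)} =
      {p1234, p2134, p1324, p1243, p1432, p2143, p3214, p4321} := by
  ext w
  simp only [Set.mem_ofPred_eq, Set.mem_insert_iff, Set.mem_singleton_iff,
    I_subset_subSystem_NΔ_iff]
  revert w
  decide

end A3
end

section
/- In a finite Coxeter group (W, S), an element w is the longest element of the standard parabolic subgroup W_{S(w)} if and only if its left descent set equals its support: D_L(w) = S(w). -/
/-!
Suppose `D_L(w) = S(w) =: J`. By the lifting property of the Bruhat order (if `u ≤ w` and `s` is a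
left descent of `w`, then `s u ≤ w`), induction on a word in `J` shows that every `u ∈ W_J` lies
below `w` and so is not longer than `w`. The lifting property rests on the strong exchange
condition, obtained from Bourbaki's action of `W` on `W × ℤ/2`, in which `s` sends `(t, ε)` to
`(s t s, ε + [t = s])`: the braid relations hold because along `(s s')^m` every reflection of
the dihedral group `⟨s, s'⟩` is met an even number of times, and the second coordinate of the
action of `π ω` on `(t, 0)` counts, mod 2, the occurrences of `t` in the right inversion
sequence of `ω`. Conversely, if `w` is longest in `W_{S(w)}` then every `s ∈ S(w)` shortens `w`,
and a left descent `s` lies in `S(w)` because `w` has a reduced word beginning with `s`.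
-/

open Finset

theorem Function.End.pow_apply_of_skewProduct {X A : Type*} [AddCommMonoid A]
    {g : Function.End (X × A)} {f : X → X} {χ : X → A}
    (hg : ∀ p, g p = (f p.1, p.2 + χ p.1))
    (n : ℕ) (p : X × A) :
    (g ^ n) p = (f^[n] p.1, p.2 + ∑ k ∈ range n, χ (f^[k] p.1)) := by
  induction n generalizing p with
  | zero => simp; rfl
  | succ n ih =>
    change (g ^ n) (g p) = _
    rw [hg, ih, sum_range_succ']
    simp only [Function.iterate_succ_apply, Function.iterate_zero_apply, add_assoc,
      add_comm (χ p.1)]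

theorem Finset.sum_range_two_mul {M : Type*} [AddCommMonoid M] (f : ℕ → M) (n : ℕ) :
    ∑ r ∈ range (2 * n), f r = ∑ k ∈ range n, (f (2 * k) + f (2 * k + 1)) := by
  induction n with
  | zero => simp
  | succ n ih => rw [Nat.mul_succ, sum_range_succ, sum_range_succ, sum_range_succ, ih, add_assoc]

theorem iterate_conj_apply {G : Type*} [Group G] (a t : G) (k : ℕ) :
    (fun x => a * x * a⁻¹)^[k] t = a ^ k * t * (a ^ k)⁻¹ := by
  induction k with
  | zero => simp
  | succ k ih => rw [Function.iterate_succ_apply', ih]; group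

namespace CoxeterSystem

variable {B W : Type*} [Group W] {M : CoxeterMatrix B} (cs : CoxeterSystem M W)

local prefix:100 "s" => cs.simple
local prefix:100 "π" => cs.wordProd
local prefix:100 "ℓ" => cs.length
local prefix:100 "ris " => cs.rightInvSeq

section ReflectionCocycle

open scoped Classical

noncomputable def signedConj (i : B) : Function.End (W × ZMod 2) :=
  fun p => (s i * p.1 * s i, p.2 + if p.1 = s i then 1 else 0)

theorem signedConj_mul_signedConj_apply (i j : B) (p : W × ZMod 2) :
    (signedConj cs i * signedConj cs j) p =
      (s i * s j * p.1 * (s i * s j)⁻¹,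
        p.2 + ((if p.1 = s j then 1 else 0) + if p.1 = s j * s i * s j then 1 else 0)) := by
  have hconj : s j * p.1 * s j = s i ↔ p.1 = s j * s i * s j := by
    constructor <;> intro h
    · simp [← h, mul_assoc]
    · simp [h, mul_assoc]
  change (s i * (s j * p.1 * s j) * s i,
    p.2 + (if p.1 = s j then 1 else 0) + if s j * p.1 * s j = s i then 1 else 0) = _
  rw [hconj, add_assoc]
  simp only [mul_inv_rev, cs.inv_simple, mul_assoc]

theorem sum_range_dihedral_indicator_eq_zero (i j : B) (t : W) :
    ∑ k ∈ range (M i j),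
      ((if (s i * s j) ^ k * t * ((s i * s j) ^ k)⁻¹ = s j then (1 : ZMod 2) else 0) +
        if (s i * s j) ^ k * t * ((s i * s j) ^ k)⁻¹ = s j * s i * s j then 1 else 0) = 0 := by
  set a := s i * s j
  have hsa : ∀ k : ℕ, s j * a ^ k = (a ^ k)⁻¹ * s j := fun k =>
    ((show SemiconjBy (s j) a a⁻¹ by
      simp [SemiconjBy, a, mul_assoc]).pow_right k).trans (by rw [inv_pow])
  -- the sum is `∑ r < 2 * M i j, [t = e r]` and `e` has period `M i j`: every term occurs twice
  set e : ℕ → W := fun r => (a ^ r)⁻¹ * s j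
  have hind : ∀ k r : ℕ, (if a ^ k * t * (a ^ k)⁻¹ = e r then (1 : ZMod 2) else 0) =
      if t = e (r + 2 * k) then 1 else 0 := by
    intro k r
    have he : (a ^ k)⁻¹ * e r * a ^ k = e (r + 2 * k) := by
      simp only [e, mul_assoc, hsa]
      group
    have hconj : a ^ k * t * (a ^ k)⁻¹ = e r ↔ t = (a ^ k)⁻¹ * e r * a ^ k := by
      constructor <;> intro h <;> [rw [← h]; rw [h]] <;> group
    simp only [hconj, he]
  have he0 : e 0 = s j := by simp [e]
  have he1 : e 1 = s j * s i * s j := by simp [e, a, mul_assoc]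
  have hper : ∀ r, e (M i j + r) = e r := fun r => by
    simp [e, pow_add, a, cs.simple_mul_simple_pow]
  calc _ = ∑ r ∈ range (2 * M i j), if t = e r then (1 : ZMod 2) else 0 := by
        rw [← he1, ← he0]
        simp only [hind, sum_range_two_mul, zero_add, add_comm 1]
    _ = 0 := by
        rw [two_mul, sum_range_add]
        simp only [hper, CharTwo.add_self_eq_zero]

theorem isLiftable_signedConj : M.IsLiftable (signedConj cs) := by
  intro i j
  funext p
  rw [Function.End.pow_apply_of_skewProduct (f := fun t => s i * s j * t * (s i * s j)⁻¹)
    (χ := fun t => (if t = s j then 1 else 0) + if t = s j * s i * s j then 1 else 0)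
    (signedConj_mul_signedConj_apply cs i j)]
  simp only [iterate_conj_apply, cs.simple_mul_simple_pow, sum_range_dihedral_indicator_eq_zero,
    one_mul, inv_one, mul_one, add_zero]
  rfl

noncomputable def signedConjHom : W →* Function.End (W × ZMod 2) :=
  cs.lift ⟨signedConj cs, isLiftable_signedConj cs⟩

noncomputable def reflectionCocycle (w t : W) : ZMod 2 := (signedConjHom cs w (t, 0)).2

theorem signedConjHom_simple (i : B) : signedConjHom cs (s i) = signedConj cs i :=
  cs.lift_apply_simple (isLiftable_signedConj cs) i

theorem signedConjHom_apply (w : W) (p : W × ZMod 2) :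
    signedConjHom cs w p = (w * p.1 * w⁻¹, p.2 + reflectionCocycle cs w p.1) := by
  induction w using cs.simple_induction_left generalizing p with
  | one =>
    rw [reflectionCocycle, map_one, one_mul, inv_one, mul_one]
    exact Prod.ext rfl (add_zero p.2).symm
  | mul_simple_left w i ih =>
    rw [reflectionCocycle, map_mul, signedConjHom_simple]
    change signedConj cs i (signedConjHom cs w p) =
      (_, p.2 + (signedConj cs i (signedConjHom cs w (p.1, 0))).2)
    simp only [ih, signedConj, mul_inv_rev, cs.inv_simple, mul_assoc, zero_add, add_assoc]

theorem reflectionCocycle_mul (u v t : W) : reflectionCocycle cs (u * v) t =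
    reflectionCocycle cs v t + reflectionCocycle cs u (v * t * v⁻¹) := by
  rw [reflectionCocycle, map_mul]
  change (signedConjHom cs u (signedConjHom cs v (t, 0))).2 = _
  rw [signedConjHom_apply cs v, signedConjHom_apply cs u, zero_add]

theorem reflectionCocycle_simple (i : B) (t : W) :
    reflectionCocycle cs (s i) t = if t = s i then 1 else 0 := by
  rw [reflectionCocycle, signedConjHom_simple]
  exact zero_add _

theorem reflectionCocycle_one (t : W) : reflectionCocycle cs 1 t = 0 := by
  rw [reflectionCocycle, map_one]
  rfl

theorem reflectionCocycle_wordProd (ω : List B) (t : W) :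
    reflectionCocycle cs (π ω) t = ((ris ω).count t : ZMod 2) := by
  induction ω with
  | nil =>
    rw [cs.wordProd_nil, reflectionCocycle_one, rightInvSeq_nil, List.count_nil, Nat.cast_zero]
  | cons i ω ih =>
    have hconj : π ω * t * (π ω)⁻¹ = s i ↔ (π ω)⁻¹ * s i * π ω = t := by
      constructor <;> intro h <;> [rw [← h]; rw [← h]] <;> group
    rw [cs.wordProd_cons, reflectionCocycle_mul, ih, reflectionCocycle_simple, rightInvSeq,
      List.count_cons, hconj]
    simp

theorem mem_rightInvSeq_of_reflectionCocycle_eq_one {ω : List B} {t : W}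
    (h : reflectionCocycle cs (π ω) t = 1) : t ∈ ris ω := by
  rw [reflectionCocycle_wordProd] at h
  refine List.count_pos_iff.mp (Nat.pos_of_ne_zero fun h0 => ?_)
  rw [h0, Nat.cast_zero] at h
  exact zero_ne_one h

theorem isRightInversion_of_reflectionCocycle_eq_one {w t : W}
    (h : reflectionCocycle cs w t = 1) : cs.IsRightInversion w t := by
  obtain ⟨ω, hω, rfl⟩ := cs.exists_isReduced w
  exact cs.isRightInversion_of_mem_rightInvSeq hω
    (mem_rightInvSeq_of_reflectionCocycle_eq_one cs h)

theorem reflectionCocycle_inv (w t : W) :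
    reflectionCocycle cs w⁻¹ t = reflectionCocycle cs w (w⁻¹ * t * w) := by
  have h := reflectionCocycle_mul cs w w⁻¹ t
  rw [mul_inv_cancel, reflectionCocycle_one, inv_inv] at h
  exact CharTwo.add_eq_zero.mp h.symm

theorem reflectionCocycle_self {t : W} (ht : cs.IsReflection t) : reflectionCocycle cs t t = 1 := by
  obtain ⟨x, i, rfl⟩ := ht
  have hconj : x⁻¹ * (x * s i * x⁻¹) * x = s i := by group
  calc reflectionCocycle cs (x * s i * x⁻¹) (x * s i * x⁻¹)
      = reflectionCocycle cs x (s i) + reflectionCocycle cs (x * s i) (s i) := by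
        rw [reflectionCocycle_mul, inv_inv, hconj, reflectionCocycle_inv, hconj]
    _ = reflectionCocycle cs x (s i) + (1 + reflectionCocycle cs x (s i)) := by
        rw [reflectionCocycle_mul, reflectionCocycle_simple, if_pos rfl, cs.inv_simple,
          cs.simple_mul_simple_cancel_right]
    _ = 1 := by rw [add_left_comm, CharTwo.add_self_eq_zero, add_zero]

theorem reflectionCocycle_eq_one_iff {w t : W} (ht : cs.IsReflection t) :
    reflectionCocycle cs w t = 1 ↔ cs.IsRightInversion w t := by
  refine ⟨isRightInversion_of_reflectionCocycle_eq_one cs, fun h => ?_⟩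
  have hne : reflectionCocycle cs (w * t) t ≠ 1 := fun h' => by
    have hlt := (isRightInversion_of_reflectionCocycle_eq_one cs h').2
    rw [mul_assoc, ht.mul_self, mul_one] at hlt
    exact hlt.not_gt h.2
  have hzero : reflectionCocycle cs (w * t) t = 0 :=
    (by decide : ∀ x : ZMod 2, x ≠ 1 → x = 0) _ hne
  calc reflectionCocycle cs w t = reflectionCocycle cs (w * t * t) t := by
        rw [mul_assoc, ht.mul_self, mul_one]
    _ = 1 := by
        rw [reflectionCocycle_mul, reflectionCocycle_self cs ht, ht.inv, mul_assoc, ht.mul_self,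
          mul_one, hzero, add_zero]

theorem mem_rightInvSeq_of_isRightInversion {ω : List B} {t : W}
    (h : cs.IsRightInversion (π ω) t) : t ∈ ris ω :=
  mem_rightInvSeq_of_reflectionCocycle_eq_one cs ((reflectionCocycle_eq_one_iff cs h.1).mpr h)

end ReflectionCocycle

theorem simple_mul_eq_mul_of_length_le {y t : W} {i : B} (ht : cs.IsReflection t)
    (hy : ℓ y < ℓ (s i * y)) (hyt : ℓ y < ℓ (y * t)) (h : ℓ (s i * (y * t)) ≤ ℓ y) :
    s i * y = y * t := by
  obtain ⟨δ, hδ, hδy⟩ := cs.exists_isReduced (s i * (y * t))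
  have hprod : π (i :: δ) = y * t := by
    rw [cs.wordProd_cons, ← hδy, cs.simple_mul_simple_cancel_left]
  have hinv : cs.IsRightInversion (π (i :: δ)) t := by
    rw [hprod]
    refine ⟨ht, ?_⟩
    rwa [mul_assoc, ht.mul_self, mul_one]
  rcases List.mem_cons.mp (mem_rightInvSeq_of_isRightInversion cs hinv) with hfirst | hrest
  · have hyδ : y = π δ := by
      calc y = π (i :: δ) * t := by rw [hprod, mul_assoc, ht.mul_self, mul_one]
        _ = π δ := by simp [hfirst, cs.wordProd_cons, mul_assoc]
    rw [← hprod, cs.wordProd_cons, hyδ]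
  · have hlt := (cs.isRightInversion_of_mem_rightInvSeq hδ hrest).2
    rw [← hδy, mul_assoc, mul_assoc, ht.mul_self, mul_one] at hlt
    omega

-- The reflexive transitive closure of `BruhatStep` is the Bruhat order, in its chain description.
def BruhatStep (x y : W) : Prop := ∃ t, cs.IsReflection t ∧ y = x * t ∧ ℓ x < ℓ y

theorem length_le_of_reflTransGen_bruhatStep {x y : W}
    (h : Relation.ReflTransGen cs.BruhatStep x y) : ℓ x ≤ ℓ y := by
  induction h with
  | refl => exact le_rfl
  | tail _ hstep ih =>
    obtain ⟨t, -, rfl, hlt⟩ := hstep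
    omega

theorem bruhatStep_simple_mul {x : W} {i : B} (h : ℓ (s i * x) < ℓ x) :
    cs.BruhatStep (s i * x) x :=
  ⟨x⁻¹ * s i * x, ⟨x⁻¹, i, by rw [inv_inv]⟩, by simp [mul_assoc], h⟩

theorem reflTransGen_bruhatStep_one (w : W) : Relation.ReflTransGen cs.BruhatStep 1 w := by
  induction h : ℓ w using Nat.strong_induction_on generalizing w with
  | _ n ih =>
    by_cases hw : w = 1
    · rw [hw]
    obtain ⟨i, hi⟩ := cs.exists_rightDescent_of_ne_one hw
    refine (ih _ (h ▸ hi) (w * s i) rfl).tail ⟨s i, cs.isReflection_simple i, ?_, hi⟩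
    rw [cs.simple_mul_simple_cancel_right]

theorem reflTransGen_bruhatStep_simple_mul (i : B) {x y : W}
    (h : Relation.ReflTransGen cs.BruhatStep x y) :
    Relation.ReflTransGen cs.BruhatStep (s i * x) y ∨
      Relation.ReflTransGen cs.BruhatStep (s i * x) (s i * y) := by
  induction h with
  | refl =>
    rcases (cs.length_simple_mul_ne x i).lt_or_gt with hx | hx
    · exact .inl (.single (bruhatStep_simple_mul cs hx))
    · exact .inr .refl
  | @tail y z _ hstep ih =>
    obtain ⟨t, ht, rfl, hlt⟩ := hstep
    rcases ih with ih | ih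
    · exact .inl (ih.tail ⟨t, ht, rfl, hlt⟩)
    rcases (ht.length_mul_left_ne (s i * y)).lt_or_gt with hdown | hup
    · rcases (cs.length_simple_mul_ne y i).lt_or_gt with hy | hy
      · exact .inl ((ih.tail (bruhatStep_simple_mul cs hy)).tail ⟨t, ht, rfl, hlt⟩)
      · have heq : s i * y = y * t := simple_mul_eq_mul_of_length_le cs ht hy hlt (by
          rw [← mul_assoc]
          rcases cs.length_simple_mul y i with h | h <;> omega)
        exact .inl (heq ▸ ih)
    · exact .inr (ih.tail ⟨t, ht, (mul_assoc _ _ _).symm, by rwa [← mul_assoc]⟩)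

theorem reflTransGen_bruhatStep_wordProd {w : W} {α : List B}
    (hα : ∀ i ∈ α, i ∈ cs.leftDescents w) :
    Relation.ReflTransGen cs.BruhatStep (π α) w := by
  induction α with
  | nil => exact reflTransGen_bruhatStep_one cs w
  | cons i α ih =>
    rw [cs.wordProd_cons]
    rcases reflTransGen_bruhatStep_simple_mul cs i (ih fun j hj => hα j (.tail i hj)) with h | h
    · exact h
    · exact h.tail (bruhatStep_simple_mul cs (hα i List.mem_cons_self))

theorem exists_wordProd_of_mem_parabolic {J : Set B} {u : W} (hu : u ∈ cs.parabolic J) :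
    ∃ α : List B, (∀ i ∈ α, i ∈ J) ∧ π α = u := by
  induction hu using Subgroup.closure_induction with
  | mem x hx =>
    obtain ⟨i, hi, rfl⟩ := hx
    exact ⟨[i], by simpa using hi, cs.wordProd_singleton i⟩
  | one => exact ⟨[], by simp, cs.wordProd_nil⟩
  | mul x y _ _ hx hy =>
    obtain ⟨α, hα, rfl⟩ := hx
    obtain ⟨β, hβ, rfl⟩ := hy
    exact ⟨α ++ β, fun i hi => (List.mem_append.mp hi).elim (hα i) (hβ i),
      cs.wordProd_append α β⟩
  | inv x _ hx =>
    obtain ⟨α, hα, rfl⟩ := hx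
    exact ⟨α.reverse, fun i hi => hα i (List.mem_reverse.mp hi), cs.wordProd_reverse α⟩

theorem length_le_of_mem_parabolic_leftDescents {w u : W}
    (hu : u ∈ cs.parabolic (cs.leftDescents w)) : ℓ u ≤ ℓ w := by
  obtain ⟨α, hα, rfl⟩ := exists_wordProd_of_mem_parabolic cs hu
  exact length_le_of_reflTransGen_bruhatStep cs (reflTransGen_bruhatStep_wordProd cs hα)

theorem mem_parabolic_support (w : W) : w ∈ cs.parabolic (cs.support w) := by
  obtain ⟨ω, hω, rfl⟩ := cs.exists_isReduced w
  refine Subgroup.list_prod_mem _ fun x hx => ?_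
  obtain ⟨i, hi, rfl⟩ := List.mem_map.mp hx
  exact Subgroup.subset_closure ⟨i, ⟨ω, hω, rfl, hi⟩, rfl⟩

theorem leftDescents_subset_support (w : W) : cs.leftDescents w ⊆ cs.support w := by
  intro i hi
  obtain ⟨δ, hδ, hδw⟩ := cs.exists_isReduced (s i * w)
  have hprod : π (i :: δ) = w := by
    rw [cs.wordProd_cons, ← hδw, cs.simple_mul_simple_cancel_left]
  refine ⟨i :: δ, ?_, hprod, List.mem_cons_self⟩
  have hlen : ℓ (s i * w) + 1 = ℓ w := by
    have hi' : ℓ (s i * w) < ℓ w := hi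
    rcases cs.length_simple_mul w i with h | h <;> omega
  rw [IsReduced, hprod, List.length_cons, ← hδ.eq, ← hδw, hlen]

end CoxeterSystem

theorem isLongest_parabolic_support_iff_descents_eq_support_general {B W : Type*} [Group W]
    {M : CoxeterMatrix B} (cs : CoxeterSystem M W) (w : W) :
    cs.IsLongestOf (cs.parabolic (cs.support w)) w ↔ cs.leftDescents w = cs.support w := by
  constructor
  · rintro ⟨hw, hmax⟩
    refine (cs.leftDescents_subset_support w).antisymm fun i hi => ?_
    have hsw : cs.simple i * w ∈ cs.parabolic (cs.support w) :=
      mul_mem (Subgroup.subset_closure ⟨i, hi, rfl⟩) hw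
    exact (hmax _ hsw).lt_of_ne (cs.length_simple_mul_ne w i)
  · intro h
    exact ⟨cs.mem_parabolic_support w,
      fun u hu => cs.length_le_of_mem_parabolic_leftDescents (h ▸ hu)⟩

/-- in a finite Coxeter group, `w` is the longest element of the standard
parabolic subgroup `W_{S(w)}` generated by its support iff its left descent set equals
its support: `D_L(w) = S(w)`. -/
theorem isLongest_parabolic_support_iff_descents_eq_support {B W : Type*} [Group W]
    [Finite W] {M : CoxeterMatrix B} (cs : CoxeterSystem M W) (w : W) :
    cs.IsLongestOf (cs.parabolic (cs.support w)) w ↔ cs.leftDescents w = cs.support w :=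
  isLongest_parabolic_support_iff_descents_eq_support_general cs w
end
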